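/- arXiv:2506.11708 — 5 statements merged into one kernel-verified Lean document; each statement's English description precedes it below -/
import Mathlib

section
/- Let E ⊂ ℝⁿ be a bounded convex set with 0 ∈ int E and radii r_E, R_E with B(0, r_E) ⊆ E ⊆ B(0, R_E). Then for all ξ, η ∈ ℝⁿ ∖ {0} one has | ξ/|ξ|_E − η/|η|_E |_E ≤ (R_E/r_E)·(2/|ξ|_E)·|ξ−η|_E. -/
/-- For a bounded convex set `E` with `0 ∈ int E` and radii
`B(0, r_E) ⊆ E ⊆ B̄(0, R_E)`, for all `ξ, η ≠ 0` one has
`| ξ/|ξ|_E − η/|η|_E |_E ≤ (R_E/r_E) · (2/|ξ|_E) · |ξ−η|_E`. -/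
theorem minkowski_normalized_difference (n : ℕ)
    (E : Set (EuclideanSpace ℝ (Fin n)))
    (hEconv : Convex ℝ E) (hEbdd : Bornology.IsBounded E)
    (hE0 : (0 : EuclideanSpace ℝ (Fin n)) ∈ interior E)
    (rE RE : ℝ) (hrE : 0 < rE) (hRE : 0 < RE)
    (hball : Metric.ball (0 : EuclideanSpace ℝ (Fin n)) rE ⊆ E)
    (hball' : E ⊆ Metric.closedBall (0 : EuclideanSpace ℝ (Fin n)) RE) :
    ∀ ξ η : EuclideanSpace ℝ (Fin n), ξ ≠ 0 → η ≠ 0 →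
      gauge E ((gauge E ξ)⁻¹ • ξ - (gauge E η)⁻¹ • η)
        ≤ (RE / rE) * (2 / gauge E ξ) * gauge E (ξ - η) := by
  intro ξ η hξ hη
  have hA : Absorbent ℝ E := (absorbent_ball_zero hrE).mono hball
  have hup : ∀ x : EuclideanSpace ℝ (Fin n), gauge E x ≤ ‖x‖ / rE := by
    intro x
    have := gauge_mono (absorbent_ball_zero hrE) hball x
    rwa [gauge_ball hrE.le] at this
  have hlow : ∀ x : EuclideanSpace ℝ (Fin n), ‖x‖ / RE ≤ gauge E x := by
    intro x
    have := gauge_mono hA hball' x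
    rwa [gauge_closedBall hRE.le] at this
  have hpos : ∀ x : EuclideanSpace ℝ (Fin n), x ≠ 0 → 0 < gauge E x := by
    intro x hx
    have : (0:ℝ) < ‖x‖ / RE := div_pos (norm_pos_iff.2 hx) hRE
    exact this.trans_le (hlow x)
  -- r_E ≤ R_E
  have hrR : rE ≤ RE := by
    by_contra h
    push_neg at h
    set t : ℝ := (RE + rE) / 2 with ht
    have htpos : 0 < t := by positivity
    have ht1 : t < rE := by simp only [ht]; linarith
    have ht2 : RE < t := by simp only [ht]; linarith
    set x : EuclideanSpace ℝ (Fin n) := (t / ‖ξ‖) • ξ with hx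
    have hnx : ‖x‖ = t := by
      have hnξ : ‖ξ‖ ≠ 0 := norm_ne_zero_iff.2 hξ
      rw [hx, norm_smul, Real.norm_of_nonneg (by positivity)]
      field_simp
    have hxE : x ∈ E := hball (by simp [Metric.mem_ball, hnx]; exact ht1)
    have := hball' hxE
    rw [Metric.mem_closedBall, dist_zero_right, hnx] at this
    linarith
  have hfac : (1:ℝ) ≤ RE / rE := (one_le_div hrE).2 hrR
  have hkey : ∀ x : EuclideanSpace ℝ (Fin n),
      gauge E x ≤ (RE / rE) * gauge E (-x) := by
    intro x
    calc gauge E x ≤ ‖x‖ / rE := hup x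
      _ = (RE / rE) * (‖-x‖ / RE) := by rw [norm_neg]; field_simp
      _ ≤ (RE / rE) * gauge E (-x) := by
          apply mul_le_mul_of_nonneg_left (hlow _) (by positivity)
  set a := gauge E ξ with ha'
  set b := gauge E η with hb'
  have ha : 0 < a := hpos ξ hξ
  have hb : 0 < b := hpos η hη
  have hid : a⁻¹ • ξ - b⁻¹ • η = a⁻¹ • (ξ - η) + (a⁻¹ - b⁻¹) • η := by
    simp [smul_sub, sub_smul]
  have hsub := gauge_add_le hEconv hA (a⁻¹ • (ξ - η)) ((a⁻¹ - b⁻¹) • η)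
  rw [← hid] at hsub
  have h1 : gauge E (a⁻¹ • (ξ - η)) = a⁻¹ * gauge E (ξ - η) := by
    rw [gauge_smul_of_nonneg (by positivity : (0:ℝ) ≤ a⁻¹)]; simp [smul_eq_mul]
  -- bound the second term
  have h2 : gauge E ((a⁻¹ - b⁻¹) • η) ≤ (RE / rE) * gauge E (ξ - η) / a := by
    rcases le_total b⁻¹ a⁻¹ with hc | hc
    · -- a ≤ b case: (a⁻¹ - b⁻¹) ≥ 0
      have hba : b - a ≤ gauge E (η - ξ) := by
        have := gauge_add_le hEconv hA ξ (η - ξ)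
        simp only [add_sub_cancel] at this
        linarith
      have heq : gauge E ((a⁻¹ - b⁻¹) • η) = (a⁻¹ - b⁻¹) * b := by
        rw [gauge_smul_of_nonneg (by linarith : (0:ℝ) ≤ a⁻¹ - b⁻¹)]
        simp [smul_eq_mul]
        exact Or.inl hb'.symm
      have hval : (a⁻¹ - b⁻¹) * b = (b - a) / a := by field_simp
      have hstep : (b - a) / a ≤ gauge E (η - ξ) / a :=
        div_le_div_of_nonneg_right hba ha.le
      have hflip : gauge E (η - ξ) ≤ (RE / rE) * gauge E (ξ - η) := by
        have := hkey (η - ξ); rwa [neg_sub] at this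
      rw [heq, hval]
      calc (b - a) / a ≤ gauge E (η - ξ) / a := hstep
        _ ≤ (RE / rE) * gauge E (ξ - η) / a :=
            div_le_div_of_nonneg_right hflip ha.le
    · -- b ≤ a case
      have hab : a - b ≤ gauge E (ξ - η) := by
        have := gauge_add_le hEconv hA η (ξ - η)
        simp only [add_sub_cancel] at this
        linarith
      have heq : gauge E ((a⁻¹ - b⁻¹) • η) = (b⁻¹ - a⁻¹) * gauge E (-η) := by
        have : (a⁻¹ - b⁻¹) • η = (b⁻¹ - a⁻¹) • (-η) := by
          rw [smul_neg, ← neg_smul]; ring_nf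
        rw [this, gauge_smul_of_nonneg (by linarith : (0:ℝ) ≤ b⁻¹ - a⁻¹)]
        simp [smul_eq_mul]
      have hnegη : gauge E (-η) ≤ (RE / rE) * b := by
        have := hkey (-η); rwa [neg_neg] at this
      rw [heq]
      calc (b⁻¹ - a⁻¹) * gauge E (-η) ≤ (b⁻¹ - a⁻¹) * ((RE / rE) * b) :=
            mul_le_mul_of_nonneg_left hnegη (by linarith)
        _ = (RE / rE) * ((a - b) / a) := by field_simp
        _ ≤ (RE / rE) * (gauge E (ξ - η) / a) := by
            apply mul_le_mul_of_nonneg_left _ (by positivity)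
            exact div_le_div_of_nonneg_right hab ha.le
        _ = (RE / rE) * gauge E (ξ - η) / a := by ring
  have hg : 0 ≤ gauge E (ξ - η) := gauge_nonneg _
  have h1' : a⁻¹ * gauge E (ξ - η) ≤ (RE / rE) * gauge E (ξ - η) / a := by
    rw [div_eq_mul_inv, mul_comm a⁻¹]
    exact mul_le_mul_of_nonneg_right (le_mul_of_one_le_left hg hfac) (inv_nonneg.2 ha.le)
  calc gauge E (a⁻¹ • ξ - b⁻¹ • η)
      ≤ gauge E (a⁻¹ • (ξ - η)) + gauge E ((a⁻¹ - b⁻¹) • η) := hsub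
    _ ≤ (RE / rE) * gauge E (ξ - η) / a + (RE / rE) * gauge E (ξ - η) / a := by
        rw [h1]; exact add_le_add h1' h2
    _ = (RE / rE) * (2 / a) * gauge E (ξ - η) := by field_simp; ring
end

section
/- Let E ⊂ ℝⁿ be a bounded convex set with 0 ∈ int E and radii r_E, R_E with B(0, r_E) ⊆ E ⊆ B(0, R_E), and let δ ≥ 0. Then for all ξ, η ∈ ℝⁿ one has |𝒢_δ(ξ) − 𝒢_δ(η)| ≤ 3·(R_E/r_E)²·|ξ−η|, where |·| denotes the Euclidean norm. -/
open Classical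

/-- The map `𝒢_δ(ξ) = ((|ξ|_E − (1+δ))₊ / |ξ|_E) · ξ` (extended by `𝒢_δ(0) = 0`),
where `|·|_E` is the Minkowski (gauge) functional of `E`. -/
noncomputable def Gdelta {n : ℕ} (E : Set (EuclideanSpace ℝ (Fin n))) (δ : ℝ)
    (ξ : EuclideanSpace ℝ (Fin n)) : EuclideanSpace ℝ (Fin n) :=
  if ξ = 0 then 0 else (max (gauge E ξ - (1 + δ)) 0 / gauge E ξ) • ξ

set_option maxHeartbeats 1000000 in
theorem Gdelta_lipschitz_aux (n : ℕ)
    (E : Set (EuclideanSpace ℝ (Fin n)))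
    (hEconv : Convex ℝ E)
    (hE0 : (0 : EuclideanSpace ℝ (Fin n)) ∈ interior E)
    (rE RE : ℝ) (hrE : 0 < rE) (hRE : 0 < RE)
    (hball : Metric.ball (0 : EuclideanSpace ℝ (Fin n)) rE ⊆ E)
    (hball' : E ⊆ Metric.closedBall (0 : EuclideanSpace ℝ (Fin n)) RE)
    (δ : ℝ) (hδ : 0 ≤ δ) (ξ η : EuclideanSpace ℝ (Fin n))
    (hba : gauge E η ≤ gauge E ξ) :
    ‖Gdelta E δ ξ - Gdelta E δ η‖ ≤ 3 * (RE / rE) ^ 2 * ‖ξ - η‖ := by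
  by_cases hξη : ξ = η
  · simp only [hξη, sub_self, norm_zero]
    positivity
  have habs : Absorbent ℝ E := absorbent_nhds_zero (mem_interior_iff_mem_nhds.mp hE0)
  have habsb : Absorbent ℝ (Metric.ball (0 : EuclideanSpace ℝ (Fin n)) rE) :=
    absorbent_nhds_zero (Metric.ball_mem_nhds 0 hrE)
  have hup : ∀ x : EuclideanSpace ℝ (Fin n), gauge E x ≤ ‖x‖ / rE := fun x => by
    simpa [gauge_ball hrE.le] using gauge_mono habsb hball x
  have hlow : ∀ x : EuclideanSpace ℝ (Fin n), ‖x‖ / RE ≤ gauge E x := fun x => by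
    simpa [gauge_closedBall hRE.le] using gauge_mono habs hball' x
  have hnormpos : 0 < ‖ξ - η‖ := by
    rw [norm_pos_iff]; exact sub_ne_zero.mpr hξη
  have hrR : rE ≤ RE := by
    have h3 : ‖ξ - η‖ / RE ≤ ‖ξ - η‖ / rE := le_trans (hlow _) (hup _)
    rw [div_le_div_iff₀ hRE hrE] at h3
    nlinarith
  have hK1 : 1 ≤ RE / rE := (one_le_div hrE).mpr hrR
  have hKle : RE / rE ≤ 3 * (RE / rE) ^ 2 := by nlinarith [sq_nonneg (RE / rE - 1)]
  set c := 1 + δ with hc_def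
  set a := gauge E ξ with ha_def
  set b := gauge E η with hb_def
  clear_value a b c
  have hc : 0 < c := by rw [hc_def]; positivity
  have hb0 : 0 ≤ b := hb_def ▸ gauge_nonneg η
  -- Lipschitz bound for the gauge
  have hab : a - b ≤ ‖ξ - η‖ / rE := by
    have h1 := gauge_add_le hEconv habs η (ξ - η)
    have h2 : η + (ξ - η) = ξ := by abel
    rw [h2, ← ha_def, ← hb_def] at h1
    have := hup (ξ - η)
    linarith
  have hξnorm : ‖ξ‖ ≤ RE * a := by
    have := hlow ξ
    rw [div_le_iff₀ hRE, ← ha_def] at this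
    linarith
  have hηnorm : ‖η‖ ≤ RE * b := by
    have := hlow η
    rw [div_le_iff₀ hRE, ← hb_def] at this
    linarith
  by_cases hA : a ≤ c
  · -- both terms vanish
    have hz : ∀ x : EuclideanSpace ℝ (Fin n), gauge E x ≤ c → Gdelta E δ x = 0 := by
      intro x hx
      unfold Gdelta
      split
      · rfl
      · rw [max_eq_right (by rw [← hc_def]; linarith), zero_div, zero_smul]
    rw [hz ξ (ha_def ▸ hA), hz η (hb_def ▸ le_trans hba hA), sub_zero, norm_zero]
    positivity
  push_neg at hA
  have ha0 : 0 < a := lt_trans hc hA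
  have hξ0 : ξ ≠ 0 := by
    intro h
    rw [h, gauge_zero] at ha_def
    linarith
  have hGξ : Gdelta E δ ξ = ((a - c) / a) • ξ := by
    unfold Gdelta
    rw [if_neg hξ0, ← ha_def, ← hc_def, max_eq_left (by linarith)]
  by_cases hB : b ≤ c
  · -- second term vanishes
    have hGη : Gdelta E δ η = 0 := by
      unfold Gdelta
      split
      · rfl
      · rw [← hb_def, ← hc_def, max_eq_right (by linarith), zero_div, zero_smul]
    rw [hGξ, hGη, sub_zero, norm_smul, Real.norm_eq_abs,
      abs_of_nonneg (div_nonneg (by linarith) ha0.le)]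
    have step1 : (a - c) / a * ‖ξ‖ ≤ (a - c) / a * (RE * a) :=
      mul_le_mul_of_nonneg_left hξnorm (div_nonneg (by linarith) ha0.le)
    have step2 : (a - c) / a * (RE * a) = RE * (a - c) := by
      field_simp
    have step3 : RE * (a - c) ≤ RE * (a - b) := by nlinarith
    have step4 : RE * (a - b) ≤ RE * (‖ξ - η‖ / rE) :=
      mul_le_mul_of_nonneg_left hab hRE.le
    have step5 : RE * (‖ξ - η‖ / rE) = (RE / rE) * ‖ξ - η‖ := by ring
    have step6 : (RE / rE) * ‖ξ - η‖ ≤ 3 * (RE / rE) ^ 2 * ‖ξ - η‖ :=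
      mul_le_mul_of_nonneg_right hKle hnormpos.le
    linarith
  push_neg at hB
  have hb0' : 0 < b := lt_trans hc hB
  have hη0 : η ≠ 0 := by
    intro h
    rw [h, gauge_zero] at hb_def
    linarith
  have hGη : Gdelta E δ η = ((b - c) / b) • η := by
    unfold Gdelta
    rw [if_neg hη0, ← hb_def, ← hc_def, max_eq_left (by linarith)]
  rw [hGξ, hGη]
  have hid : ((a - c) / a) • ξ - ((b - c) / b) • η
      = (1 - c / a) • (ξ - η) + (c / b - c / a) • η := by
    match_scalars <;> field_simp <;> ring
  rw [hid]
  have hca : c / a ≤ 1 := (div_le_one ha0).mpr hA.le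
  have hca0 : 0 ≤ c / a := by positivity
  have hcba : c / a ≤ c / b := div_le_div_of_nonneg_left hc.le hb0' hba
  calc ‖(1 - c / a) • (ξ - η) + (c / b - c / a) • η‖
      ≤ ‖(1 - c / a) • (ξ - η)‖ + ‖(c / b - c / a) • η‖ := norm_add_le _ _
    _ = (1 - c / a) * ‖ξ - η‖ + (c / b - c / a) * ‖η‖ := by
        rw [norm_smul, norm_smul, Real.norm_eq_abs, Real.norm_eq_abs,
          abs_of_nonneg (by linarith), abs_of_nonneg (by linarith)]
    _ ≤ 1 * ‖ξ - η‖ + (c / b - c / a) * (RE * b) := by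
        have h1 : (1 - c / a) * ‖ξ - η‖ ≤ 1 * ‖ξ - η‖ :=
          mul_le_mul_of_nonneg_right (by linarith) hnormpos.le
        have h2 : (c / b - c / a) * ‖η‖ ≤ (c / b - c / a) * (RE * b) :=
          mul_le_mul_of_nonneg_left hηnorm (by linarith)
        linarith
    _ = ‖ξ - η‖ + RE * (c / a) * (a - b) := by
        rw [one_mul]
        congr 1
        field_simp
    _ ≤ ‖ξ - η‖ + RE * (a - b) := by
        have hab0 : 0 ≤ a - b := by linarith
        nlinarith [mul_le_mul_of_nonneg_right hca hab0, hRE.le]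
    _ ≤ ‖ξ - η‖ + (RE / rE) * ‖ξ - η‖ := by
        have h := mul_le_mul_of_nonneg_left hab hRE.le
        have heq : RE * (‖ξ - η‖ / rE) = (RE / rE) * ‖ξ - η‖ := by ring
        linarith [heq ▸ h]
    _ ≤ 3 * (RE / rE) ^ 2 * ‖ξ - η‖ := by
        have h1 : (1 : ℝ) * ‖ξ - η‖ ≤ (RE / rE) * ‖ξ - η‖ :=
          mul_le_mul_of_nonneg_right hK1 hnormpos.le
        have h2 : (RE / rE) * ‖ξ - η‖ + (RE / rE) * ‖ξ - η‖
            ≤ 3 * (RE / rE) ^ 2 * ‖ξ - η‖ := by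
          have := mul_le_mul_of_nonneg_right hKle hnormpos.le
          nlinarith [mul_le_mul_of_nonneg_right hKle hnormpos.le,
            mul_le_mul_of_nonneg_right hK1 hnormpos.le, sq_nonneg (RE/rE)]
        linarith
/-- **Lipschitz estimate for `𝒢_δ`**: for a bounded convex set `E` with
`0 ∈ int E` and radii `B(0, r_E) ⊆ E ⊆ B̄(0, R_E)`, and any `δ ≥ 0`,
`|𝒢_δ(ξ) − 𝒢_δ(η)| ≤ 3 (R_E/r_E)² |ξ − η|`. -/
theorem Gdelta_lipschitz (n : ℕ)
    (E : Set (EuclideanSpace ℝ (Fin n)))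
    (hEconv : Convex ℝ E) (hEbdd : Bornology.IsBounded E)
    (hE0 : (0 : EuclideanSpace ℝ (Fin n)) ∈ interior E)
    (rE RE : ℝ) (hrE : 0 < rE) (hRE : 0 < RE)
    (hball : Metric.ball (0 : EuclideanSpace ℝ (Fin n)) rE ⊆ E)
    (hball' : E ⊆ Metric.closedBall (0 : EuclideanSpace ℝ (Fin n)) RE)
    (δ : ℝ) (hδ : 0 ≤ δ) :
    ∀ ξ η : EuclideanSpace ℝ (Fin n),
      ‖Gdelta E δ ξ - Gdelta E δ η‖ ≤ 3 * (RE / rE) ^ 2 * ‖ξ - η‖ := by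
  intro ξ η
  rcases le_total (gauge E η) (gauge E ξ) with h | h
  · exact Gdelta_lipschitz_aux n E hEconv hE0 rE RE hrE hRE hball hball' δ hδ ξ η h
  · rw [norm_sub_rev, norm_sub_rev ξ η]
    exact Gdelta_lipschitz_aux n E hEconv hE0 rE RE hrE hRE hball hball' δ hδ η ξ h
end

section
/- Let E ⊂ ℝⁿ be a bounded convex set with 0 ∈ int E and radii r_E, R_E with B(0, r_E) ⊆ E ⊆ B(0, R_E), and let δ > 0. Then for all ξ, η ∈ ℝⁿ with |ξ|_E ≥ 1+δ one has |ξ−η| ≤ 3·(R_E/r_E)²·(1 + 1/δ)·|𝒢(ξ) − 𝒢(η)|, where |·| denotes the Euclidean norm. -/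
open Classical

set_option maxHeartbeats 2000000 in
/-- **Reverse Lipschitz estimate for `𝒢 = 𝒢_0`**: for a bounded convex set `E` with
`0 ∈ int E`, radii `B(0, r_E) ⊆ E ⊆ B̄(0, R_E)`, and `δ > 0`, for all `ξ, η` with
`|ξ|_E ≥ 1+δ` one has `|ξ − η| ≤ 3 (R_E/r_E)² (1 + 1/δ) |𝒢(ξ) − 𝒢(η)|`. -/
theorem Gdelta_reverse_lipschitz (n : ℕ)
    (E : Set (EuclideanSpace ℝ (Fin n)))
    (hEconv : Convex ℝ E) (hEbdd : Bornology.IsBounded E)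
    (hE0 : (0 : EuclideanSpace ℝ (Fin n)) ∈ interior E)
    (rE RE : ℝ) (hrE : 0 < rE) (hRE : 0 < RE)
    (hball : Metric.ball (0 : EuclideanSpace ℝ (Fin n)) rE ⊆ E)
    (hball' : E ⊆ Metric.closedBall (0 : EuclideanSpace ℝ (Fin n)) RE)
    (δ : ℝ) (hδ : 0 < δ) :
    ∀ ξ η : EuclideanSpace ℝ (Fin n), 1 + δ ≤ gauge E ξ →
      ‖ξ - η‖ ≤ 3 * (RE / rE) ^ 2 * (1 + 1 / δ) * ‖Gdelta E 0 ξ - Gdelta E 0 η‖ := by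
  intro ξ η hξ
  -- trivial case ξ = η
  rcases eq_or_ne ξ η with rfl | hne
  · simp [sub_self]
  -- rE ≤ RE
  have hrR : rE ≤ RE := by
    by_contra h
    push_neg at h
    set v : EuclideanSpace ℝ (Fin n) := ξ - η with hv
    have hv0 : v ≠ 0 := sub_ne_zero.mpr hne
    set u : EuclideanSpace ℝ (Fin n) := (((RE + rE) / 2) / ‖v‖) • v with hu
    have hvn : ‖v‖ ≠ 0 := norm_ne_zero_iff.mpr hv0
    have hnu : ‖u‖ = (RE + rE) / 2 := by
      rw [hu, norm_smul, Real.norm_eq_abs, abs_of_nonneg (by positivity)]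
      field_simp
    have h1 : u ∈ Metric.ball (0 : EuclideanSpace ℝ (Fin n)) rE := by
      simp [Metric.mem_ball, dist_zero_right, hnu]; linarith
    have h2 := hball' (hball h1)
    simp [Metric.mem_closedBall, dist_zero_right, hnu] at h2
    linarith
  have habs : Absorbent ℝ E := absorbent_nhds_zero (mem_interior_iff_mem_nhds.mp hE0)
  -- gauge bounds
  have hup : ∀ x : EuclideanSpace ℝ (Fin n), rE * gauge E x ≤ ‖x‖ :=
    fun x => mul_gauge_le_norm hball
  have hlow : ∀ x : EuclideanSpace ℝ (Fin n), ‖x‖ ≤ RE * gauge E x := by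
    intro x
    have := gauge_mono habs hball' x
    rw [gauge_closedBall hRE.le] at this
    calc ‖x‖ = RE * (‖x‖ / RE) := by field_simp
    _ ≤ RE * gauge E x := by nlinarith
  have hadd : ∀ x y : EuclideanSpace ℝ (Fin n), gauge E (x + y) ≤ gauge E x + gauge E y :=
    gauge_add_le hEconv habs
  set a := gauge E ξ with ha
  set b := gauge E η with hb
  have ha1 : (1:ℝ) < a := by linarith
  have ha0 : (0:ℝ) < a := by linarith
  have hb0 : (0:ℝ) ≤ b := gauge_nonneg η
  have hξ0 : ξ ≠ 0 := by
    rintro rfl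
    rw [ha, gauge_zero] at hξ; linarith [hξ]
  set lam : ℝ := (a - 1) / a with hlam
  set mu : ℝ := max (b - 1) 0 / b with hmu
  have hGξ : Gdelta E 0 ξ = lam • ξ := by
    rw [Gdelta, if_neg hξ0]
    congr 1
    rw [← ha, hlam]
    congr 1
    rw [max_eq_left (by linarith)]
    ring_nf
  have hGη : Gdelta E 0 η = mu • η := by
    rcases eq_or_ne η 0 with rfl | hη0
    · simp [Gdelta]
    · rw [Gdelta, if_neg hη0, ← hb, hmu]
      norm_num
  have hlamlb : δ / (1 + δ) ≤ lam := by
    rw [hlam, div_le_div_iff₀ (by linarith) ha0]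
    nlinarith
  have hlampos : 0 < lam := lt_of_lt_of_le (by positivity) hlamlb
  set D := ‖Gdelta E 0 ξ - Gdelta E 0 η‖ with hD
  have hD0 : 0 ≤ D := norm_nonneg _
  -- gauge of images
  have hgGξ : gauge E (Gdelta E 0 ξ) = a - 1 := by
    rw [hGξ, hlam, gauge_smul_of_nonneg (by positivity : (0:ℝ) ≤ (a-1)/a), smul_eq_mul, ← ha]
    field_simp
  have hgGη : gauge E (Gdelta E 0 η) = max (b - 1) 0 := by
    rcases eq_or_ne η 0 with rfl | hη0
    · have : b = 0 := by rw [hb, gauge_zero]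
      simp [Gdelta, gauge_zero, this]
    · have hb0' : 0 < b := by
        have := hlow η
        have hη : 0 < ‖η‖ := norm_pos_iff.mpr hη0
        nlinarith
      rw [hGη, hmu, gauge_smul_of_nonneg (by positivity), smul_eq_mul, ← hb]
      field_simp
  -- D ≥ rE * |(a-1) - max (b-1) 0|
  have hDlow : rE * |(a - 1) - max (b - 1) 0| ≤ D := by
    have h1 : gauge E (Gdelta E 0 ξ - Gdelta E 0 η) ≥ (a-1) - max (b-1) 0 := by
      have := hadd (Gdelta E 0 ξ - Gdelta E 0 η) (Gdelta E 0 η)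
      rw [sub_add_cancel, hgGξ, hgGη] at this
      linarith
    have h2 : gauge E (Gdelta E 0 η - Gdelta E 0 ξ) ≥ max (b-1) 0 - (a-1) := by
      have := hadd (Gdelta E 0 η - Gdelta E 0 ξ) (Gdelta E 0 ξ)
      rw [sub_add_cancel, hgGξ, hgGη] at this
      linarith
    rcases abs_cases ((a - 1) - max (b - 1) 0) with ⟨he, _⟩ | ⟨he, _⟩
    · rw [he]
      calc rE * ((a-1) - max (b-1) 0) ≤ rE * gauge E (Gdelta E 0 ξ - Gdelta E 0 η) := by
            nlinarith
      _ ≤ D := hup _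
    · rw [he]
      calc rE * -((a-1) - max (b-1) 0) ≤ rE * gauge E (Gdelta E 0 η - Gdelta E 0 ξ) := by
            nlinarith
      _ ≤ ‖Gdelta E 0 η - Gdelta E 0 ξ‖ := hup _
      _ = D := by rw [hD, norm_sub_rev]
  -- key bound: |mu - lam| * ‖η‖ ≤ (RE/rE) * D
  have hB1 : |mu - lam| * ‖η‖ ≤ (RE / rE) * D := by
    rcases eq_or_ne η 0 with rfl | hη0
    · simp
      positivity
    have hb0' : 0 < b := by
      have := hlow η
      have hη : 0 < ‖η‖ := norm_pos_iff.mpr hη0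
      nlinarith
    have hηle : ‖η‖ ≤ RE * b := hlow η
    rcases le_or_gt b 1 with hble | hbgt
    · -- b ≤ 1 : mu = 0
      have hmu0 : mu = 0 := by
        rw [hmu, max_eq_right (by linarith)]; simp
      have hmax : max (b-1) 0 = 0 := max_eq_right (by linarith)
      rw [hmu0, zero_sub, abs_neg, abs_of_pos hlampos]
      have hDlow' : rE * (a - 1) ≤ D := by
        rw [hmax] at hDlow
        rwa [sub_zero, abs_of_pos (by linarith)] at hDlow
      have h1 : lam * ‖η‖ ≤ (a - 1) * (RE * b) / a := by
        rw [hlam]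
        rw [div_mul_eq_mul_div, div_le_div_iff₀ ha0 ha0]
        have : (a-1) * ‖η‖ ≤ (a-1) * (RE * b) := by nlinarith
        nlinarith
      have h2 : (a - 1) * (RE * b) / a ≤ RE * (a - 1) := by
        rw [div_le_iff₀ ha0]
        nlinarith [mul_nonneg (mul_nonneg (by linarith : (0:ℝ) ≤ a - 1) hRE.le)
          (by linarith : (0:ℝ) ≤ a - b)]
      calc lam * ‖η‖ ≤ RE * (a-1) := le_trans h1 h2
      _ = (RE / rE) * (rE * (a-1)) := by field_simp
      _ ≤ (RE / rE) * D := by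
            apply mul_le_mul_of_nonneg_left hDlow' (by positivity)
    · -- b > 1
      have hmax : max (b-1) 0 = b - 1 := max_eq_left (by linarith)
      have hmue : mu = (b - 1) / b := by rw [hmu, hmax]
      have hdiff : mu - lam = (b - a) / (a * b) := by
        rw [hmue, hlam]
        field_simp
        ring
      have hDlow' : rE * |a - b| ≤ D := by
        rw [hmax] at hDlow
        have : (a - 1) - (b - 1) = a - b := by ring
        rwa [this] at hDlow
      rw [hdiff, abs_div, abs_of_pos (by positivity : (0:ℝ) < a * b), abs_sub_comm b a]
      calc |a - b| / (a * b) * ‖η‖ ≤ |a - b| / (a * b) * (RE * b) := by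
            apply mul_le_mul_of_nonneg_left hηle (by positivity)
      _ = RE * |a - b| / a := by field_simp
      _ ≤ RE * |a - b| := by
            rw [div_le_iff₀ ha0]
            nlinarith [mul_nonneg (mul_nonneg hRE.le (abs_nonneg (a - b)))
              (by linarith : (0:ℝ) ≤ a - 1)]
      _ = (RE / rE) * (rE * |a - b|) := by field_simp
      _ ≤ (RE / rE) * D := mul_le_mul_of_nonneg_left hDlow' (by positivity)
  -- vector identity and main estimate
  have hvec : lam • (ξ - η) = (Gdelta E 0 ξ - Gdelta E 0 η) + (mu - lam) • η := by
    rw [hGξ, hGη, smul_sub, sub_smul]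
    abel
  have hkey : lam * ‖ξ - η‖ ≤ D + |mu - lam| * ‖η‖ := by
    have : ‖lam • (ξ - η)‖ ≤ D + ‖(mu - lam) • η‖ := by
      rw [hvec]; exact norm_add_le _ _
    rwa [norm_smul, norm_smul, Real.norm_eq_abs, Real.norm_eq_abs,
      abs_of_pos hlampos] at this
  have hstep : lam * ‖ξ - η‖ ≤ (1 + RE / rE) * D := by
    have : D + |mu - lam| * ‖η‖ ≤ D + (RE / rE) * D := by linarith
    linarith
  -- conclude
  have ht1 : (1:ℝ) ≤ RE / rE := (one_le_div hrE).mpr hrR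
  have hlaminv : 1 / lam ≤ 1 + 1 / δ := by
    rw [div_le_iff₀ hlampos]
    have : (1 + 1/δ) * (δ / (1+δ)) = 1 := by field_simp; ring
    nlinarith [mul_le_mul_of_nonneg_left hlamlb (by positivity : (0:ℝ) ≤ 1 + 1/δ)]
  have h3 : (1 + RE / rE) ≤ 3 * (RE / rE)^2 := by nlinarith
  calc ‖ξ - η‖ = (1 / lam) * (lam * ‖ξ - η‖) := by field_simp
  _ ≤ (1 + 1/δ) * ((1 + RE/rE) * D) := by
        apply mul_le_mul hlaminv hstep (by positivity) (by positivity)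
  _ ≤ (1 + 1/δ) * (3 * (RE/rE)^2 * D) :=
        mul_le_mul_of_nonneg_left (mul_le_mul_of_nonneg_right h3 hD0) (by positivity)
  _ = 3 * (RE / rE)^2 * (1 + 1/δ) * D := by ring
end

section
/- Let E ⊂ ℝⁿ be a bounded convex set with 0 ∈ int E, let M > 0, let (X, d) be a metric space, and let v : X → ℝⁿ satisfy |v(x)| ≤ M for all x ∈ X. If the composition 𝒢 ∘ v : X → ℝⁿ is uniformly continuous, then for every continuous function 𝒦 : ℝⁿ → ℝ with 𝒦 ≡ 0 on E, the composition 𝒦 ∘ v : X → ℝ is uniformly continuous. -/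
open Classical Topology Metric

/-- The map `𝒢(ξ) = ((|ξ|_E − 1)₊ / |ξ|_E) · ξ` (extended by `𝒢(0) = 0`),
where `|·|_E` is the Minkowski (gauge) functional of `E`. -/
noncomputable def GE {n : ℕ} (E : Set (EuclideanSpace ℝ (Fin n)))
    (ξ : EuclideanSpace ℝ (Fin n)) : EuclideanSpace ℝ (Fin n) :=
  if ξ = 0 then 0 else (max (gauge E ξ - 1) 0 / gauge E ξ) • ξ

/-- **Transfer of continuity** (from the proof of the paper's main theorem):
if `v : X → ℝⁿ` is bounded and `𝒢 ∘ v` is uniformly continuous, then `𝒦 ∘ v`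
is uniformly continuous for every continuous `𝒦 : ℝⁿ → ℝ` vanishing on the
bounded convex set `E` with `0 ∈ int E`. -/
theorem transfer_of_uniform_continuity (n : ℕ)
    (E : Set (EuclideanSpace ℝ (Fin n)))
    (hEconv : Convex ℝ E) (hEbdd : Bornology.IsBounded E)
    (hE0 : (0 : EuclideanSpace ℝ (Fin n)) ∈ interior E)
    (M : ℝ) (hM : 0 < M)
    (X : Type*) [MetricSpace X]
    (v : X → EuclideanSpace ℝ (Fin n))
    (hv : ∀ x : X, ‖v x‖ ≤ M)
    (hGv : UniformContinuous (fun x : X => GE E (v x)))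
    (𝒦 : EuclideanSpace ℝ (Fin n) → ℝ)
    (h𝒦 : Continuous 𝒦) (h𝒦0 : ∀ ξ ∈ E, 𝒦 ξ = 0) :
    UniformContinuous (fun x : X => 𝒦 (v x)) := by
  have hEnhds : E ∈ 𝓝 (0 : EuclideanSpace ℝ (Fin n)) := mem_interior_iff_mem_nhds.1 hE0
  have habs : Absorbent ℝ E := absorbent_nhds_zero hEnhds
  have hvnb : Bornology.IsVonNBounded ℝ E := (NormedSpace.isVonNBounded_iff ℝ).2 hEbdd
  obtain ⟨r, hr⟩ := hEbdd.subset_closedBall 0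
  set R : ℝ := |r| + 1 with hRdef
  have hR0 : (0 : ℝ) < R := by positivity
  have hER : E ⊆ Metric.ball 0 R :=
    hr.trans (Metric.closedBall_subset_ball (by
      have := le_abs_self r; simp only [hRdef]; linarith))
  have hnormle : ∀ ξ : EuclideanSpace ℝ (Fin n), ‖ξ‖ ≤ R * gauge E ξ := by
    intro ξ
    have h := gauge_mono habs hER ξ
    rw [gauge_ball hR0.le] at h
    rw [div_le_iff₀ hR0] at h
    linarith [h]
  have hgpos : ∀ ξ : EuclideanSpace ℝ (Fin n), ξ ≠ 0 → 0 < gauge E ξ :=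
    fun ξ h => (gauge_pos habs hvnb).2 h
  have hgc : Continuous (gauge E) := continuous_gauge hEconv hEnhds
  -- 𝒦 vanishes wherever the gauge is ≤ 1
  have hK1 : ∀ ξ : EuclideanSpace ℝ (Fin n), gauge E ξ ≤ 1 → 𝒦 ξ = 0 := by
    intro ξ hξ
    have hξc : ξ ∈ closure E := (gauge_le_one_iff_mem_closure hEconv hEnhds).1 hξ
    have hsub : closure E ⊆ {x | 𝒦 x = 0} :=
      closure_minimal (fun x hx => h𝒦0 x hx) (isClosed_eq h𝒦 continuous_const)
    exact hsub hξc
  -- the reconstruction map and the factor `H`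
  set F : EuclideanSpace ℝ (Fin n) → EuclideanSpace ℝ (Fin n) :=
    fun η => η + (gauge E η)⁻¹ • η with hFdef
  set H : EuclideanSpace ℝ (Fin n) → ℝ :=
    fun η => if η = 0 then 0 else 𝒦 (F η) with hHdef
  -- key identity: 𝒦 = H ∘ GE
  have key : ∀ ξ : EuclideanSpace ℝ (Fin n), 𝒦 ξ = H (GE E ξ) := by
    intro ξ
    by_cases hξ0 : ξ = 0
    · have h0 : 𝒦 (0 : EuclideanSpace ℝ (Fin n)) = 0 := hK1 0 (by rw [gauge_zero]; norm_num)
      simp [GE, hξ0, hHdef, h0]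
    · have hg0 : 0 < gauge E ξ := hgpos ξ hξ0
      by_cases hg1 : gauge E ξ ≤ 1
      · have hGE0 : GE E ξ = 0 := by
          simp only [GE, if_neg hξ0]
          rw [max_eq_right (by linarith)]
          simp
        rw [hGE0]
        simp [hHdef, hK1 ξ hg1]
      · push_neg at hg1
        have hmax : max (gauge E ξ - 1) 0 = gauge E ξ - 1 := max_eq_left (by linarith)
        set c : ℝ := (gauge E ξ - 1) / gauge E ξ with hcdef
        have hc0 : 0 < c := div_pos (by linarith) hg0
        have hGE : GE E ξ = c • ξ := by simp only [GE, if_neg hξ0, hmax]; rfl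
        have hη0 : c • ξ ≠ 0 := smul_ne_zero hc0.ne' hξ0
        have hgη : gauge E (c • ξ) = gauge E ξ - 1 := by
          rw [gauge_smul_of_nonneg hc0.le, smul_eq_mul, hcdef]
          field_simp
        rw [hGE, hHdef]
        simp only [if_neg hη0]
        have hFval : F (c • ξ) = ξ := by
          simp only [hFdef, hgη, smul_smul]
          rw [← add_smul]
          have hone : c + (gauge E ξ - 1)⁻¹ * c = 1 := by
            have hg1ne : gauge E ξ - 1 ≠ 0 := by linarith
            rw [hcdef]
            field_simp
            ring
          rw [hone, one_smul]
        rw [hFval]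
  -- GE is norm-decreasing
  have hGEnorm : ∀ ξ : EuclideanSpace ℝ (Fin n), ‖GE E ξ‖ ≤ ‖ξ‖ := by
    intro ξ
    by_cases hξ0 : ξ = 0
    · simp [GE, hξ0]
    · simp only [GE, if_neg hξ0, norm_smul, Real.norm_eq_abs]
      have hg0 : 0 < gauge E ξ := hgpos ξ hξ0
      have h2 : 0 ≤ max (gauge E ξ - 1) 0 / gauge E ξ :=
        div_nonneg (le_max_right _ _) hg0.le
      have h1 : max (gauge E ξ - 1) 0 / gauge E ξ ≤ 1 :=
        (div_le_one hg0).2 (max_le (by linarith) hg0.le)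
      rw [abs_of_nonneg h2]
      nlinarith [norm_nonneg ξ]
  -- H is continuous
  have hHcont : Continuous H := by
    rw [continuous_iff_continuousAt]
    intro η
    by_cases hη : η = 0
    · subst hη
      have hH0 : H 0 = 0 := by simp [hHdef]
      rw [ContinuousAt, hH0, Metric.tendsto_nhds]
      intro ε hε
      -- uniform continuity of 𝒦 on a big closed ball
      have hKc : IsCompact (Metric.closedBall (0 : EuclideanSpace ℝ (Fin n)) (R + 1)) :=
        isCompact_closedBall _ _
      have hKuc := hKc.uniformContinuousOn_of_continuous h𝒦.continuousOn
      obtain ⟨δ, hδ0, hδ⟩ := (Metric.uniformContinuousOn_iff).1 hKuc ε hε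
      filter_upwards [Metric.ball_mem_nhds (0 : EuclideanSpace ℝ (Fin n))
        (lt_min hδ0 one_pos)] with ζ hζ
      rw [Metric.mem_ball, dist_zero_right] at hζ
      by_cases hζ0 : ζ = 0
      · simpa [hHdef, hζ0] using hε
      · have hgζ : 0 < gauge E ζ := hgpos ζ hζ0
        set p : EuclideanSpace ℝ (Fin n) := (gauge E ζ)⁻¹ • ζ with hpdef
        have hgp : gauge E p = 1 := by
          rw [hpdef, gauge_smul_of_nonneg (inv_nonneg.2 hgζ.le), smul_eq_mul]
          field_simp
        have hpn : ‖p‖ ≤ R := by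
          have := hnormle p
          rw [hgp] at this
          linarith
        have hpB : p ∈ Metric.closedBall (0 : EuclideanSpace ℝ (Fin n)) (R + 1) := by
          rw [Metric.mem_closedBall, dist_zero_right]; linarith
        have hFB : F ζ ∈ Metric.closedBall (0 : EuclideanSpace ℝ (Fin n)) (R + 1) := by
          rw [Metric.mem_closedBall, dist_zero_right]
          have : ‖F ζ‖ ≤ ‖ζ‖ + ‖p‖ := norm_add_le _ _
          have hζ1 : ‖ζ‖ < 1 := lt_of_lt_of_le hζ (min_le_right _ _)
          linarith
        have hdist : dist (F ζ) p < δ := by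
          have : F ζ - p = ζ := by simp [hFdef, hpdef]
          rw [dist_eq_norm, this]
          exact lt_of_lt_of_le hζ (min_le_left _ _)
        have h𝒦p : 𝒦 p = 0 := hK1 p (le_of_eq hgp)
        have := hδ (F ζ) hFB p hpB hdist
        rw [h𝒦p] at this
        simpa [hHdef, hζ0, Real.dist_eq] using this
    · have hFc : ContinuousAt F η := by
        apply ContinuousAt.add continuousAt_id
        exact ContinuousAt.smul ((hgc.continuousAt).inv₀ (hgpos η hη).ne') continuousAt_id
      have hcong : (fun ζ => 𝒦 (F ζ)) =ᶠ[𝓝 η] H := by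
        filter_upwards [isOpen_compl_singleton.mem_nhds (by simpa using hη :
          η ∈ ({0} : Set (EuclideanSpace ℝ (Fin n)))ᶜ)] with ζ hζ
        simp only [Set.mem_compl_iff, Set.mem_singleton_iff] at hζ
        simp [hHdef, hζ]
      exact (h𝒦.continuousAt.comp hFc).congr hcong
  -- assemble
  set K : Set (EuclideanSpace ℝ (Fin n)) := Metric.closedBall 0 M with hKdef
  have hKcomp : IsCompact K := isCompact_closedBall _ _
  haveI : CompactSpace K := isCompact_iff_compactSpace.1 hKcomp
  have hmem : ∀ x : X, GE E (v x) ∈ K := by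
    intro x
    rw [hKdef, Metric.mem_closedBall, dist_zero_right]
    exact (hGEnorm (v x)).trans (hv x)
  have hf : UniformContinuous (fun x : X => (⟨GE E (v x), hmem x⟩ : K)) :=
    hGv.subtype_mk _
  have hHK : UniformContinuous (fun η : K => H (η : EuclideanSpace ℝ (Fin n))) :=
    CompactSpace.uniformContinuous_of_continuous (hHcont.comp continuous_subtype_val)
  have heq : (fun x : X => 𝒦 (v x))
      = (fun η : K => H (η : EuclideanSpace ℝ (Fin n)))
        ∘ (fun x : X => (⟨GE E (v x), hmem x⟩ : K)) := by
    funext x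
    simp only [Function.comp_apply]
    exact key (v x)
  rw [heq]
  exact hHK.comp hf
end

section
/- Let n ≥ 1, p ≥ 2, and let a ∈ ℝ with 0 < C₁ ≤ a ≤ C₂. Define F_p : ℝⁿ → ℝ by F_p(ξ) := (1/p)·(|ξ| − 1)_+^p. Then for every ξ ∈ ℝⁿ with |ξ| > 1 and every η ∈ ℝⁿ one has C₁·((|ξ| − 1)^{p−1} / |ξ|)·|η|² ≤ ⟨a·∇²F_p(ξ)·η, η⟩ ≤ C₂·(p−1)·(|ξ| − 1)^{p−2}·|η|². -/
open scoped RealInnerProductSpace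

/-- The prototype integrand `F_p(ξ) = (1/p) (|ξ| − 1)₊^p` of the widely degenerate
`p`-Laplacian-type equation, with degeneracy set the closed unit ball. -/
noncomputable def Fp (n : ℕ) (p : ℝ) (ξ : EuclideanSpace ℝ (Fin n)) : ℝ :=
  (1 / p) * (max (‖ξ‖ - 1) 0) ^ p

variable {n : ℕ} {p : ℝ}

lemma hasFDerivAt_norm' (x : EuclideanSpace ℝ (Fin n)) (hx : x ≠ 0) :
    HasFDerivAt (fun y : EuclideanSpace ℝ (Fin n) => ‖y‖)
      (‖x‖⁻¹ • (innerSL ℝ x)) x := by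
  have hxn : ‖x‖ ≠ 0 := norm_ne_zero_iff.2 hx
  have hns : ‖x‖ ^ 2 ≠ 0 := pow_ne_zero 2 hxn
  have h1 : HasFDerivAt (fun y : EuclideanSpace ℝ (Fin n) => ‖y‖ ^ 2)
      (2 • (innerSL ℝ x).comp (ContinuousLinearMap.id ℝ _)) x :=
    (hasFDerivAt_id x).norm_sq
  have h2 := (Real.hasDerivAt_sqrt hns).comp_hasFDerivAt x h1
  have hfun : (fun y : EuclideanSpace ℝ (Fin n) => Real.sqrt (‖y‖ ^ 2))
      = fun y => ‖y‖ := by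
    funext y; rw [Real.sqrt_sq (norm_nonneg y)]
  rw [show ((fun x => Real.sqrt x) ∘ fun y : EuclideanSpace ℝ (Fin n) => ‖y‖ ^ 2) = fun y => ‖y‖ from hfun] at h2
  refine h2.congr_fderiv ?_
  ext y
  have : Real.sqrt (‖x‖ ^ 2) = ‖x‖ := Real.sqrt_sq (norm_nonneg x)
  simp only [this, ContinuousLinearMap.smul_apply, ContinuousLinearMap.coe_smul',
    Pi.smul_apply, ContinuousLinearMap.coe_comp', Function.comp_apply,
    ContinuousLinearMap.coe_id', id, two_smul, smul_eq_mul, ContinuousLinearMap.add_apply]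
  field_simp
  ring

lemma key_arith (a C₁ C₂ A B s e : ℝ) (hC₁ : 0 < C₁) (ha₁ : C₁ ≤ a) (ha₂ : a ≤ C₂)
    (hB0 : 0 < B) (hBA : B ≤ A) (hs0 : 0 ≤ s) (hs1 : s ≤ e) (he : 0 ≤ e) :
    C₁ * B * e ≤ a * (B * e + (A - B) * s) ∧
      a * (B * e + (A - B) * s) ≤ C₂ * A * e := by
  have hQ0 : 0 ≤ B * e + (A - B) * s := by nlinarith
  constructor
  · nlinarith [mul_nonneg (sub_nonneg.2 ha₁) hQ0,
      mul_nonneg hC₁.le (mul_nonneg (sub_nonneg.2 hBA) hs0)]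
  · nlinarith [mul_nonneg (sub_nonneg.2 ha₂) hQ0,
      mul_nonneg (show (0:ℝ) ≤ a by linarith) (mul_nonneg (sub_nonneg.2 hBA) (sub_nonneg.2 hs1))]

/-- **Ellipticity bounds for the prototype integrand in the super-quadratic case
`p ≥ 2`** (estimate (1.8) of the paper): for `0 < C₁ ≤ a ≤ C₂`, `|ξ| > 1`, and
any `η`,
`C₁ ((|ξ|−1)^{p−1}/|ξ|) |η|² ≤ ⟨a ∇²F_p(ξ) η, η⟩ ≤ C₂ (p−1) (|ξ|−1)^{p−2} |η|²`. -/
theorem Fp_ellipticity_superquadratic (n : ℕ) (hn : 1 ≤ n) (p : ℝ) (hp : 2 ≤ p)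
    (a C₁ C₂ : ℝ) (hC₁ : 0 < C₁) (ha₁ : C₁ ≤ a) (ha₂ : a ≤ C₂) :
    ∀ ξ : EuclideanSpace ℝ (Fin n), 1 < ‖ξ‖ →
      ∀ η : EuclideanSpace ℝ (Fin n),
        C₁ * ((‖ξ‖ - 1) ^ (p - 1) / ‖ξ‖) * ‖η‖ ^ 2
            ≤ a * ⟪fderiv ℝ (gradient (Fp n p)) ξ η, η⟫ ∧
        a * ⟪fderiv ℝ (gradient (Fp n p)) ξ η, η⟫
            ≤ C₂ * (p - 1) * (‖ξ‖ - 1) ^ (p - 2) * ‖η‖ ^ 2 := by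
  intro ξ hξ η
  have hp0 : p ≠ 0 := by linarith
  have hξ0 : ξ ≠ 0 := by
    intro h; rw [h, norm_zero] at hξ; linarith
  have ht0 : (0:ℝ) < ‖ξ‖ := by linarith
  have ht1 : (0:ℝ) < ‖ξ‖ - 1 := by linarith
  set φ : EuclideanSpace ℝ (Fin n) → ℝ := fun y => (‖y‖ - 1) ^ (p-1) * ‖y‖⁻¹ with hφdef
  set G : EuclideanSpace ℝ (Fin n) → EuclideanSpace ℝ (Fin n) := fun y => φ y • y with hGdef
  have hset : IsOpen {y : EuclideanSpace ℝ (Fin n) | 1 < ‖y‖} :=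
    isOpen_lt continuous_const continuous_norm
  -- gradient identification
  have hgrad : ∀ y : EuclideanSpace ℝ (Fin n), 1 < ‖y‖ → HasGradientAt (Fp n p) (G y) y := by
    intro y hy
    have hy0 : y ≠ 0 := by intro h; rw [h, norm_zero] at hy; linarith
    have hy1 : (0:ℝ) < ‖y‖ - 1 := by linarith
    have hd1 : HasDerivAt (fun s : ℝ => s ^ p) (p * (‖y‖-1) ^ (p-1)) (‖y‖-1) :=
      Real.hasDerivAt_rpow_const (Or.inl hy1.ne')
    have hd2 : HasDerivAt (fun s : ℝ => (s-1) ^ p) (p * (‖y‖-1)^(p-1)) ‖y‖ := by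
      have := hd1.comp ‖y‖ ((hasDerivAt_id ‖y‖).sub_const 1)
      simpa [Function.comp_def] using this
    have hd3 : HasDerivAt (fun s : ℝ => (1/p) * (s-1)^p)
        ((1/p) * (p * (‖y‖-1)^(p-1))) ‖y‖ := hd2.const_mul _
    have hF0 : HasFDerivAt (fun z : EuclideanSpace ℝ (Fin n) => (1/p) * (‖z‖-1)^p)
        (((1/p)*(p*(‖y‖-1)^(p-1))) • (‖y‖⁻¹ • innerSL ℝ y)) y :=
      hd3.comp_hasFDerivAt y (hasFDerivAt_norm' y hy0)
    have hev : (Fp n p) =ᶠ[nhds y] (fun z : EuclideanSpace ℝ (Fin n) => (1/p)*(‖z‖-1)^p) := by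
      filter_upwards [hset.mem_nhds hy] with z hz
      unfold Fp
      have hz' : 1 < ‖z‖ := hz
      rw [max_eq_left (by linarith : (0:ℝ) ≤ ‖z‖ - 1)]
    have hF : HasFDerivAt (Fp n p)
        (((1/p)*(p*(‖y‖-1)^(p-1))) • (‖y‖⁻¹ • innerSL ℝ y)) y :=
      hF0.congr_of_eventuallyEq hev
    rw [hasGradientAt_iff_hasFDerivAt]
    have hdual : (InnerProductSpace.toDual ℝ (EuclideanSpace ℝ (Fin n)) (G y))
        = (((1/p)*(p*(‖y‖-1)^(p-1))) • (‖y‖⁻¹ • innerSL ℝ y)) := by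
      ext z
      simp only [hGdef, hφdef, InnerProductSpace.toDual_apply_apply, real_inner_smul_left,
        ContinuousLinearMap.smul_apply, innerSL_apply_apply, smul_eq_mul]
      field_simp
    rw [hdual]
    exact hF
  have hev' : gradient (Fp n p) =ᶠ[nhds ξ] G := by
    filter_upwards [hset.mem_nhds hξ] with y hy using
      (hgrad y (by simpa using hy)).gradient
  have hfd : fderiv ℝ (gradient (Fp n p)) ξ = fderiv ℝ G ξ := hev'.fderiv_eq
  -- derivative of φ at ξ
  set w' : ℝ := (p-1)*(‖ξ‖-1)^(p-2) * ‖ξ‖⁻¹ + (‖ξ‖-1)^(p-1) * (-(‖ξ‖^2)⁻¹) with hw'def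
  have hw : HasDerivAt (fun s : ℝ => (s-1)^(p-1) * s⁻¹) w' ‖ξ‖ := by
    have h1 : HasDerivAt (fun s : ℝ => (s-1)^(p-1)) ((p-1) * (‖ξ‖-1)^(p-1-1)) ‖ξ‖ := by
      have := (Real.hasDerivAt_rpow_const (x := ‖ξ‖-1) (p := p-1)
        (Or.inl ht1.ne')).comp ‖ξ‖ ((hasDerivAt_id ‖ξ‖).sub_const 1)
      simpa [Function.comp_def] using this
    have h2 : HasDerivAt (fun s : ℝ => s⁻¹) (-(‖ξ‖^2)⁻¹) ‖ξ‖ := hasDerivAt_inv ht0.ne'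
    have h3 := h1.mul h2
    refine h3.congr_deriv ?_
    rw [hw'def, show p - 1 - 1 = p - 2 by ring]
  have hφ' : HasFDerivAt φ (w' • (‖ξ‖⁻¹ • innerSL ℝ ξ)) ξ :=
    hw.comp_hasFDerivAt ξ (hasFDerivAt_norm' ξ hξ0)
  have hG : HasFDerivAt G
      (φ ξ • ContinuousLinearMap.id ℝ (EuclideanSpace ℝ (Fin n))
        + (w' • (‖ξ‖⁻¹ • innerSL ℝ ξ)).smulRight ξ) ξ :=
    hφ'.smul (hasFDerivAt_id ξ)
  have happ : fderiv ℝ (gradient (Fp n p)) ξ η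
      = φ ξ • η + (w' * (‖ξ‖⁻¹ * ⟪ξ, η⟫)) • ξ := by
    rw [hfd, hG.fderiv]
    simp [ContinuousLinearMap.smul_apply, innerSL_apply_apply, mul_smul]
  have hinner : ⟪fderiv ℝ (gradient (Fp n p)) ξ η, η⟫
      = φ ξ * ‖η‖^2 + (w' * (‖ξ‖⁻¹ * ⟪ξ, η⟫)) * ⟪ξ, η⟫ := by
    rw [happ, inner_add_left, real_inner_smul_left, real_inner_smul_left,
      real_inner_self_eq_norm_sq]
  set u : ℝ := ⟪ξ, η⟫ with hudef
  set A : ℝ := (p-1) * (‖ξ‖-1)^(p-2) with hAdef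
  set B : ℝ := (‖ξ‖-1)^(p-1) * ‖ξ‖⁻¹ with hBdef
  have hQ : ⟪fderiv ℝ (gradient (Fp n p)) ξ η, η⟫
      = B * ‖η‖^2 + (A - B) * (u^2 / ‖ξ‖^2) := by
    rw [hinner]
    simp only [hφdef, hBdef, hAdef, hw'def]
    field_simp
    ring
  have hpow_pos : (0:ℝ) < (‖ξ‖-1)^(p-2) := Real.rpow_pos_of_pos ht1 _
  have hpow_pos' : (0:ℝ) < (‖ξ‖-1)^(p-1) := Real.rpow_pos_of_pos ht1 _
  have hA0 : 0 < A := mul_pos (by linarith) hpow_pos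
  have hB0 : 0 < B := mul_pos hpow_pos' (inv_pos.2 ht0)
  have hsplit : (‖ξ‖-1)^(p-1) = (‖ξ‖-1)^(p-2) * (‖ξ‖-1) := by
    rw [show p - 1 = (p-2) + 1 by ring, Real.rpow_add ht1, Real.rpow_one]
  have hfrac : (‖ξ‖-1) * ‖ξ‖⁻¹ ≤ 1 := by
    rw [← div_eq_mul_inv, div_le_one ht0]; linarith
  have hBA : B ≤ A := by
    rw [hBdef, hAdef, hsplit]
    calc (‖ξ‖-1)^(p-2) * (‖ξ‖-1) * ‖ξ‖⁻¹
        = (‖ξ‖-1)^(p-2) * ((‖ξ‖-1) * ‖ξ‖⁻¹) := by ring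
      _ ≤ (‖ξ‖-1)^(p-2) * 1 := mul_le_mul_of_nonneg_left hfrac hpow_pos.le
      _ = (‖ξ‖-1)^(p-2) := mul_one _
      _ ≤ (p-1) * (‖ξ‖-1)^(p-2) := le_mul_of_one_le_left hpow_pos.le (by linarith)
  have hu2 : u^2 ≤ ‖ξ‖^2 * ‖η‖^2 := by
    rw [hudef]
    calc ⟪ξ, η⟫^2 = |⟪ξ, η⟫|^2 := (sq_abs _).symm
      _ ≤ (‖ξ‖ * ‖η‖)^2 :=
        pow_le_pow_left₀ (abs_nonneg _) (abs_real_inner_le_norm ξ η) 2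
      _ = ‖ξ‖^2 * ‖η‖^2 := mul_pow _ _ _
  have hs0 : 0 ≤ u^2 / ‖ξ‖^2 := by positivity
  have hs1 : u^2 / ‖ξ‖^2 ≤ ‖η‖^2 := by
    rw [div_le_iff₀ (by positivity)]
    linarith [hu2, mul_comm (‖ξ‖^2) (‖η‖^2)]
  have hkey := key_arith a C₁ C₂ A B (u^2 / ‖ξ‖^2) (‖η‖^2) hC₁ ha₁ ha₂ hB0 hBA hs0
    hs1 (sq_nonneg _)
  have hdiv : (‖ξ‖ - 1) ^ (p - 1) / ‖ξ‖ = B := div_eq_mul_inv _ _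
  have hCA : C₂ * (p - 1) * (‖ξ‖ - 1) ^ (p - 2) * ‖η‖ ^ 2 = C₂ * A * ‖η‖ ^ 2 := by
    rw [hAdef]; ring
  rw [hQ, hdiv, hCA]
  exact ⟨hkey.1, hkey.2⟩
end
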